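/- arXiv:1506.00940 — 2 statements merged into one kernel-verified Lean document; each statement's English description precedes it below -/
import Mathlib

section
/- For d ≥ 3 and ν > d, and for |x| > 2, the integral I₄ := ∫_{ℝ^d \ B_{2|x|}} |z|^{(1−d)/2} ⟨x − z⟩^{−ν} dz is bounded by C |x|^{(1−d)/2} for a constant C depending only on d and ν. -/
/-! On the complement of `B_{2|x|}` the weight `|z|^{(1-d)/2}` is at most
`(2|x|)^{(1-d)/2} ≤ |x|^{(1-d)/2}`, since the exponent is nonpositive. What remains is the integral
of `⟨x - z⟩^{-ν}` over all of `ℝ^d`, which by translation invariance is the integral of `⟨z⟩^{-ν}`,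
finite because `ν > d`. -/

open MeasureTheory

section ComplBall

variable {E : Type*} [NormedAddCommGroup E] [MeasurableSpace E] [OpensMeasurableSpace E]
  {μ : Measure E}

theorem setIntegral_compl_ball_rpow_mul_le {a r : ℝ} (ha : a ≤ 0) (hr : 0 < r) {f : E → ℝ}
    (hf : Integrable f μ) (hf₀ : 0 ≤ f) :
    ∫ z in (Metric.ball (0 : E) r)ᶜ, ‖z‖ ^ a * f z ∂μ ≤ r ^ a * ∫ z, f z ∂μ := by
  set s := (Metric.ball (0 : E) r)ᶜ
  have hs : MeasurableSet s := Metric.isOpen_ball.measurableSet.compl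
  have hle : ∀ z ∈ s, ‖z‖ ^ a * f z ≤ r ^ a * f z := fun z hz =>
    mul_le_mul_of_nonneg_right (Real.rpow_le_rpow_of_nonpos hr (by simpa [s] using hz) ha) (hf₀ z)
  have hint : IntegrableOn (fun z => ‖z‖ ^ a * f z) s μ := by
    refine (hf.const_mul (r ^ a)).integrableOn.mono' ?_ ?_
    · exact (by fun_prop : Measurable fun z : E => ‖z‖ ^ a).aestronglyMeasurable.mul
        hf.aestronglyMeasurable.restrict
    · filter_upwards [ae_restrict_mem hs] with z hz
      rw [Real.norm_of_nonneg (mul_nonneg (Real.rpow_nonneg (norm_nonneg z) a) (hf₀ z))]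
      exact hle z hz
  calc ∫ z in s, ‖z‖ ^ a * f z ∂μ
      ≤ ∫ z in s, r ^ a * f z ∂μ :=
        setIntegral_mono_on hint (hf.const_mul _).integrableOn hs hle
    _ ≤ ∫ z, r ^ a * f z ∂μ :=
        setIntegral_le_integral (hf.const_mul _)
          (Filter.Eventually.of_forall fun z => mul_nonneg (Real.rpow_nonneg hr.le a) (hf₀ z))
    _ = r ^ a * ∫ z, f z ∂μ := integral_const_mul _ _

end ComplBall

section JapaneseBracket

variable {E : Type*} [NormedAddCommGroup E] [NormedSpace ℝ E] [FiniteDimensional ℝ E]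
  [MeasurableSpace E] [BorelSpace E] {μ : Measure E} [μ.IsAddHaarMeasure] {ν : ℝ}

theorem integrable_sqrt_one_add_norm_sq_rpow_neg (hν : (Module.finrank ℝ E : ℝ) < ν) :
    Integrable (fun w : E => ((1 + ‖w‖ ^ 2) ^ ((1 : ℝ) / 2)) ^ (-ν)) μ := by
  refine (integrable_rpow_neg_one_add_norm_sq hν).congr (Filter.Eventually.of_forall fun w => ?_)
  dsimp only
  rw [← Real.rpow_mul (by positivity)]
  ring_nf

theorem integral_sqrt_one_add_norm_sq_rpow_neg_pos (hν : (Module.finrank ℝ E : ℝ) < ν) :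
    0 < ∫ w : E, ((1 + ‖w‖ ^ 2) ^ ((1 : ℝ) / 2)) ^ (-ν) ∂μ := by
  have hcont : Continuous fun w : E => ((1 + ‖w‖ ^ 2) ^ ((1 : ℝ) / 2)) ^ (-ν) :=
    (((by fun_prop : Continuous fun w : E => 1 + ‖w‖ ^ 2).rpow_const
      fun _ => Or.inr (by norm_num)).rpow_const fun _ => Or.inl (by positivity))
  exact integral_pos_of_integrable_nonneg_nonzero (x := 0) hcont
    (integrable_sqrt_one_add_norm_sq_rpow_neg hν) (fun w => by positivity) (by positivity)

end JapaneseBracket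

theorem integral_I4_bound
    (d : ℕ) (hd : 3 ≤ d) (ν : ℝ) (hν : (d : ℝ) < ν) :
    ∃ C > 0, ∀ x : EuclideanSpace ℝ (Fin d), 2 < ‖x‖ →
      (∫ z in (Metric.ball (0 : EuclideanSpace ℝ (Fin d)) (2 * ‖x‖))ᶜ,
          ‖z‖ ^ ((1 - (d : ℝ)) / 2) * ((1 + ‖x - z‖ ^ 2) ^ ((1 : ℝ) / 2)) ^ (-ν))
        ≤ C * ‖x‖ ^ ((1 - (d : ℝ)) / 2) := by
  have hν' : (Module.finrank ℝ (EuclideanSpace ℝ (Fin d)) : ℝ) < ν := by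
    rwa [finrank_euclideanSpace_fin]
  have ha : (1 - (d : ℝ)) / 2 ≤ 0 := by
    have : (3 : ℝ) ≤ d := by exact_mod_cast hd
    linarith
  set g := fun w : EuclideanSpace ℝ (Fin d) => ((1 + ‖w‖ ^ 2) ^ ((1 : ℝ) / 2)) ^ (-ν)
  have hC := integral_sqrt_one_add_norm_sq_rpow_neg_pos (μ := volume) hν'
  refine ⟨∫ w, g w, hC, fun x hx => ?_⟩
  calc _ ≤ (2 * ‖x‖) ^ ((1 - (d : ℝ)) / 2) * ∫ z, g (x - z) :=
        setIntegral_compl_ball_rpow_mul_le ha (by positivity)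
          ((integrable_sqrt_one_add_norm_sq_rpow_neg hν').comp_sub_left x) (fun z => by positivity)
    _ = (∫ w, g w) * (2 * ‖x‖) ^ ((1 - (d : ℝ)) / 2) := by
        rw [integral_sub_left_eq_self g volume x, mul_comm]
    _ ≤ _ := mul_le_mul_of_nonneg_left
        (Real.rpow_le_rpow_of_nonpos (by linarith) (by linarith) ha) hC.le
end

section
/- Suppose K : ℝ^d → ℝ satisfies |K(x)| ≤ C|x|^{2−d} for |x| < 1 and |K(x)| ≤ C|x|^{(1−d)/2} for |x| ≥ 1, with d ≥ 3. Then for any ν > d and any continuous v with ‖v‖_ν := sup_x ⟨x⟩^ν |v(x)| < ∞, the convolution K ∗ v(x) := ∫ K(z) v(x−z) dz is defined by an absolutely convergent integral for every x ∈ ℝ^d, and there is a constant C' (depending only on d, ν, C) such that sup_x ⟨x⟩^{(d−1)/2} |K ∗ v(x)| ≤ C' ‖v‖_ν. -/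
open MeasureTheory

noncomputable def wnorm {d : ℕ} (ν : ℝ) (f : EuclideanSpace ℝ (Fin d) → ℝ) : ℝ :=
  ⨆ x : EuclideanSpace ℝ (Fin d), ((1 + ‖x‖ ^ 2) ^ ((1 : ℝ) / 2)) ^ ν * |f x|

open Real Set Metric

/-! With `⟨x⟩ = (1 + ‖x‖²)^(1/2)` and `s = (d - 1)/2`, the inequality `⟨x⟩ ≤ ⟨x - z⟩ + ‖z‖` lets the
weight `⟨x⟩^s` be absorbed either by `v (x - z)`, which decays like `⟨x - z⟩^(-ν)`, or, when
`‖z‖ ≥ 1`, by the kernel, which decays like `⟨z⟩^(-s)`. This gives the pointwise bound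
`⟨x⟩^s |K z v (x - z)| ≤ ‖v‖_ν (2^s 1_{‖z‖<1} |K z| + 4^s C (⟨z⟩^(-ν) + ⟨x - z⟩^(-ν)))`,
whose right-hand side is integrable in `z`, with an integral independent of `x`, because `ν > d`
and the singularity `‖z‖^(2-d)` is integrable near `0`. -/

noncomputable def japaneseBracket {E : Type*} [SeminormedAddCommGroup E] (x : E) : ℝ :=
  (1 + ‖x‖ ^ 2) ^ ((1 : ℝ) / 2)

section JapaneseBracket

variable {E : Type*} [SeminormedAddCommGroup E]

lemma japaneseBracket_eq_sqrt (x : E) : japaneseBracket x = √(1 + ‖x‖ ^ 2) :=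
  (sqrt_eq_rpow _).symm

lemma one_le_japaneseBracket (x : E) : 1 ≤ japaneseBracket x := by
  rw [japaneseBracket_eq_sqrt]
  exact one_le_sqrt.2 (by nlinarith [sq_nonneg ‖x‖])

lemma japaneseBracket_pos (x : E) : 0 < japaneseBracket x :=
  one_pos.trans_le (one_le_japaneseBracket x)

lemma norm_le_japaneseBracket (x : E) : ‖x‖ ≤ japaneseBracket x := by
  rw [japaneseBracket_eq_sqrt]
  exact le_sqrt_of_sq_le (by linarith)

lemma japaneseBracket_add_le (x y : E) :
    japaneseBracket (x + y) ≤ japaneseBracket x + ‖y‖ := by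
  rw [japaneseBracket_eq_sqrt (x + y),
    sqrt_le_left (add_nonneg (japaneseBracket_pos x).le (norm_nonneg y))]
  have hxy := norm_add_le x y
  have hx := norm_le_japaneseBracket x
  have hx2 : japaneseBracket x ^ 2 = 1 + ‖x‖ ^ 2 := by
    rw [japaneseBracket_eq_sqrt, sq_sqrt (by positivity)]
  nlinarith [norm_nonneg (x + y), norm_nonneg y]

lemma japaneseBracket_le_two_mul_norm {x : E} (hx : 1 ≤ ‖x‖) :
    japaneseBracket x ≤ 2 * ‖x‖ := by
  rw [japaneseBracket_eq_sqrt, sqrt_le_left (by positivity)]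
  nlinarith

lemma japaneseBracket_rpow_neg (x : E) (r : ℝ) :
    japaneseBracket x ^ (-r) = (1 + ‖x‖ ^ 2) ^ (-r / 2) := by
  rw [japaneseBracket, ← rpow_mul (by positivity)]
  ring_nf

end JapaneseBracket

lemma integrable_japaneseBracket_rpow_neg {E : Type*} [NormedAddCommGroup E] [NormedSpace ℝ E]
    [FiniteDimensional ℝ E] [MeasurableSpace E] [BorelSpace E] (μ : Measure E)
    [μ.IsAddHaarMeasure] {ν : ℝ} (hν : Module.finrank ℝ E < ν) :
    Integrable (fun x : E => japaneseBracket x ^ (-ν)) μ := by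
  simp_rw [japaneseBracket_rpow_neg]
  exact integrable_rpow_neg_one_add_norm_sq hν

lemma integral_japaneseBracket_rpow_neg_pos {E : Type*} [NormedAddCommGroup E]
    [NormedSpace ℝ E] [FiniteDimensional ℝ E] [MeasurableSpace E] [BorelSpace E]
    (μ : Measure E) [μ.IsAddHaarMeasure] {ν : ℝ} (hν : Module.finrank ℝ E < ν) :
    0 < ∫ x, japaneseBracket x ^ (-ν) ∂μ := by
  have hpos : ∀ x : E, 0 < japaneseBracket x ^ (-ν) :=
    fun x => rpow_pos_of_pos (japaneseBracket_pos x) _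
  rw [integral_pos_iff_support_of_nonneg (fun x => (hpos x).le)
    (integrable_japaneseBracket_rpow_neg μ hν), Function.support_eq_univ fun x => (hpos x).ne']
  exact isOpen_univ.measure_pos μ univ_nonempty

lemma rpow_mul_rpow_neg_mul_rpow_neg_le {X a b s ν : ℝ} (ha : 0 < a) (hb : 0 < b) (hX : 0 ≤ X)
    (hs : 0 ≤ s) (hsν : s ≤ ν) (hXab : X ≤ a + b) :
    X ^ s * (a ^ (-s) * b ^ (-ν)) ≤ 2 ^ s * (a ^ (-ν) + b ^ (-ν)) := by
  have hXs_le {c : ℝ} (hc : 0 ≤ c) (hac : X ≤ 2 * c) : X ^ s ≤ 2 ^ s * c ^ s := by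
    rw [← mul_rpow zero_le_two hc]
    exact rpow_le_rpow hX hac hs
  rcases le_total a b with hab | hba
  · have hpow : b ^ (s - ν) ≤ a ^ (s - ν) := rpow_le_rpow_of_nonpos ha hab (by linarith)
    calc X ^ s * (a ^ (-s) * b ^ (-ν))
        ≤ 2 ^ s * b ^ s * (a ^ (-s) * b ^ (-ν)) := by
          gcongr
          exact hXs_le hb.le (by linarith)
      _ = 2 ^ s * (a ^ (-s) * b ^ (s - ν)) := by
          rw [sub_eq_add_neg, rpow_add hb]; ring
      _ ≤ 2 ^ s * (a ^ (-s) * a ^ (s - ν)) := by gcongr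
      _ = 2 ^ s * a ^ (-ν) := by rw [← rpow_add ha]; ring_nf
      _ ≤ 2 ^ s * (a ^ (-ν) + b ^ (-ν)) := by gcongr; exact le_add_of_nonneg_right (by positivity)
  · calc X ^ s * (a ^ (-s) * b ^ (-ν))
        ≤ 2 ^ s * a ^ s * (a ^ (-s) * b ^ (-ν)) := by
          gcongr
          exact hXs_le ha.le (by linarith)
      _ = 2 ^ s * b ^ (-ν) := by
          rw [← mul_assoc, mul_assoc _ (a ^ s), ← rpow_add ha, add_neg_cancel, rpow_zero, mul_one]
      _ ≤ 2 ^ s * (a ^ (-ν) + b ^ (-ν)) := by gcongr; exact le_add_of_nonneg_left (by positivity)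

section Pointwise

variable {E : Type*} [SeminormedAddCommGroup E]

lemma norm_rpow_neg_le_of_one_le {z : E} {s : ℝ} (hs : 0 ≤ s) (hz : 1 ≤ ‖z‖) :
    ‖z‖ ^ (-s) ≤ 2 ^ s * japaneseBracket z ^ (-s) := by
  have hz2 : japaneseBracket z / 2 ≤ ‖z‖ := by
    linarith [japaneseBracket_le_two_mul_norm hz]
  calc ‖z‖ ^ (-s) ≤ (japaneseBracket z / 2) ^ (-s) :=
        rpow_le_rpow_of_nonpos (by linarith [japaneseBracket_pos z]) hz2 (by linarith)
    _ = 2 ^ s * japaneseBracket z ^ (-s) := by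
        rw [div_rpow (japaneseBracket_pos z).le zero_le_two, rpow_neg zero_le_two, div_inv_eq_mul,
          mul_comm]

noncomputable def convMajorant (K : E → ℝ) (C s ν : ℝ) (x z : E) : ℝ :=
  2 ^ s * (ball 0 1).indicator (fun z => |K z|) z +
    4 ^ s * C * (japaneseBracket z ^ (-ν) + japaneseBracket (x - z) ^ (-ν))

lemma japaneseBracket_rpow_mul_abs_mul_le {K v : E → ℝ} {C M s ν : ℝ} (hC : 0 ≤ C) (hs : 0 ≤ s)
    (hsν : s ≤ ν) (hK : ∀ z : E, 1 ≤ ‖z‖ → |K z| ≤ C * ‖z‖ ^ (-s))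
    (hv : ∀ y, |v y| ≤ M * japaneseBracket y ^ (-ν)) (x z : E) :
    japaneseBracket x ^ s * |K z * v (x - z)| ≤ M * convMajorant K C s ν x z := by
  have hM : 0 ≤ M := nonneg_of_mul_nonneg_left ((abs_nonneg _).trans (hv 0))
    (rpow_pos_of_pos (japaneseBracket_pos 0) _)
  have hx : japaneseBracket x ≤ japaneseBracket (x - z) + ‖z‖ := by
    simpa using japaneseBracket_add_le (x - z) z
  set a := japaneseBracket z
  set b := japaneseBracket (x - z)
  have ha := japaneseBracket_pos z
  have hb := japaneseBracket_pos (x - z)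
  have hX := japaneseBracket_pos x
  rw [convMajorant, abs_mul, mul_left_comm]
  by_cases hz : ‖z‖ < 1
  · have hxb : japaneseBracket x ≤ 2 * b := by linarith [one_le_japaneseBracket (x - z)]
    have hweight : japaneseBracket x ^ s * |v (x - z)| ≤ 2 ^ s * M :=
      calc japaneseBracket x ^ s * |v (x - z)| ≤ (2 * b) ^ s * (M * b ^ (-ν)) := by
            gcongr
            exact hv _
        _ = 2 ^ s * M * b ^ (s - ν) := by
            rw [mul_rpow zero_le_two hb.le, show s - ν = s + -ν by ring, rpow_add hb]; ring
        _ ≤ 2 ^ s * M := by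
            refine mul_le_of_le_one_right (by positivity) ?_
            exact rpow_le_one_of_one_le_of_nonpos (one_le_japaneseBracket _) (by linarith)
    rw [indicator_of_mem (mem_ball_zero_iff.2 hz)]
    calc |K z| * (japaneseBracket x ^ s * |v (x - z)|) ≤ |K z| * (2 ^ s * M) := by gcongr
      _ ≤ M * (2 ^ s * |K z| + 4 ^ s * C * (a ^ (-ν) + b ^ (-ν))) := by
          nlinarith [show 0 ≤ M * (4 ^ s * C * (a ^ (-ν) + b ^ (-ν))) by positivity]
  · push Not at hz
    rw [indicator_of_notMem (fun h => (mem_ball_zero_iff.1 h).not_ge hz), mul_zero, zero_add]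
    have hKz : |K z| ≤ C * 2 ^ s * a ^ (-s) := by
      rw [mul_assoc]; exact (hK z hz).trans (by gcongr; exact norm_rpow_neg_le_of_one_le hs hz)
    calc |K z| * (japaneseBracket x ^ s * |v (x - z)|)
        ≤ C * 2 ^ s * a ^ (-s) * (japaneseBracket x ^ s * (M * b ^ (-ν))) := by
          gcongr
          exact hv _
      _ = C * 2 ^ s * M * (japaneseBracket x ^ s * (a ^ (-s) * b ^ (-ν))) := by ring
      _ ≤ C * 2 ^ s * M * (2 ^ s * (a ^ (-ν) + b ^ (-ν))) := by
          refine mul_le_mul_of_nonneg_left ?_ (by positivity)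
          exact rpow_mul_rpow_neg_mul_rpow_neg_le ha hb hX.le hs hsν
            (by linarith [norm_le_japaneseBracket z])
      _ = M * (4 ^ s * C * (a ^ (-ν) + b ^ (-ν))) := by
          rw [show (4 : ℝ) = 2 * 2 by norm_num, mul_rpow zero_le_two zero_le_two]; ring

end Pointwise

section Integral

variable {E : Type*} [NormedAddCommGroup E] [NormedSpace ℝ E] [FiniteDimensional ℝ E]
  [MeasurableSpace E] [BorelSpace E] {μ : Measure E} [μ.IsAddHaarMeasure]
  {K v : E → ℝ} {C M s ν : ℝ}

lemma integrable_convMajorant (hKloc : IntegrableOn K (ball 0 1) μ)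
    (hν : Module.finrank ℝ E < ν) (x : E) : Integrable (convMajorant K C s ν x) μ := by
  have hbr := integrable_japaneseBracket_rpow_neg μ hν
  exact (((integrable_indicator_iff measurableSet_ball).2 hKloc.abs).const_mul _).add
    ((hbr.add (hbr.comp_sub_left x)).const_mul _)

lemma integral_convMajorant (hKloc : IntegrableOn K (ball 0 1) μ)
    (hν : Module.finrank ℝ E < ν) (x : E) :
    ∫ z, convMajorant K C s ν x z ∂μ = 2 ^ s * ∫ z in ball 0 1, |K z| ∂μ +
      2 * 4 ^ s * C * ∫ z, japaneseBracket z ^ (-ν) ∂μ := by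
  have hbr := integrable_japaneseBracket_rpow_neg μ hν
  have hind : Integrable ((ball 0 1).indicator fun z => |K z|) μ :=
    (integrable_indicator_iff measurableSet_ball).2 hKloc.abs
  have hsum : Integrable
      (fun z => japaneseBracket z ^ (-ν) + japaneseBracket (x - z) ^ (-ν)) μ :=
    hbr.add (hbr.comp_sub_left x)
  unfold convMajorant
  rw [integral_add (hind.const_mul _) (hsum.const_mul _),
    integral_const_mul, integral_const_mul, integral_indicator measurableSet_ball,
    integral_add hbr (hbr.comp_sub_left x),
    integral_sub_left_eq_self (fun z => japaneseBracket z ^ (-ν)) μ x]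
  ring

theorem integrable_mul_comp_sub (hC : 0 ≤ C) (hs : 0 ≤ s) (hsν : s ≤ ν)
    (hν : Module.finrank ℝ E < ν) (hKm : AEStronglyMeasurable K μ)
    (hKloc : IntegrableOn K (ball 0 1) μ) (hK : ∀ z : E, 1 ≤ ‖z‖ → |K z| ≤ C * ‖z‖ ^ (-s))
    (hvc : Continuous v) (hv : ∀ y, |v y| ≤ M * japaneseBracket y ^ (-ν)) (x : E) :
    Integrable (fun z => K z * v (x - z)) μ := by
  refine ((integrable_convMajorant (C := C) (s := s) hKloc hν x).const_mul M).mono'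
    (hKm.mul (hvc.comp (continuous_sub_left x)).aestronglyMeasurable) (ae_of_all _ fun z => ?_)
  calc ‖K z * v (x - z)‖ ≤ japaneseBracket x ^ s * |K z * v (x - z)| :=
        le_mul_of_one_le_left (abs_nonneg _) (one_le_rpow (one_le_japaneseBracket x) hs)
    _ ≤ M * convMajorant K C s ν x z :=
        japaneseBracket_rpow_mul_abs_mul_le hC hs hsν hK hv x z

theorem japaneseBracket_rpow_mul_abs_integral_le (hC : 0 ≤ C) (hs : 0 ≤ s) (hsν : s ≤ ν)
    (hν : Module.finrank ℝ E < ν) (hKm : AEStronglyMeasurable K μ)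
    (hKloc : IntegrableOn K (ball 0 1) μ) (hK : ∀ z : E, 1 ≤ ‖z‖ → |K z| ≤ C * ‖z‖ ^ (-s))
    (hvc : Continuous v) (hv : ∀ y, |v y| ≤ M * japaneseBracket y ^ (-ν))
    (x : E) :
    japaneseBracket x ^ s * |∫ z, K z * v (x - z) ∂μ| ≤
      M * (2 ^ s * ∫ z in ball 0 1, |K z| ∂μ +
        2 * 4 ^ s * C * ∫ z, japaneseBracket z ^ (-ν) ∂μ) := by
  have hint := integrable_mul_comp_sub hC hs hsν hν hKm hKloc hK hvc hv x
  calc japaneseBracket x ^ s * |∫ z, K z * v (x - z) ∂μ|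
      ≤ japaneseBracket x ^ s * ∫ z, |K z * v (x - z)| ∂μ :=
        mul_le_mul_of_nonneg_left abs_integral_le_integral_abs
          (rpow_nonneg (japaneseBracket_pos x).le _)
    _ = ∫ z, japaneseBracket x ^ s * |K z * v (x - z)| ∂μ := (integral_const_mul _ _).symm
    _ ≤ ∫ z, M * convMajorant K C s ν x z ∂μ :=
        integral_mono (hint.abs.const_mul _) ((integrable_convMajorant hKloc hν x).const_mul M)
          (japaneseBracket_rpow_mul_abs_mul_le hC hs hsν hK hv x)
    _ = _ := by rw [integral_const_mul, integral_convMajorant hKloc hν x]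

end Integral

lemma abs_le_wnorm_mul_japaneseBracket_rpow_neg {d : ℕ} {ν : ℝ}
    {v : EuclideanSpace ℝ (Fin d) → ℝ}
    (hvb : BddAbove (range fun x => ((1 + ‖x‖ ^ 2) ^ ((1 : ℝ) / 2)) ^ ν * |v x|))
    (y : EuclideanSpace ℝ (Fin d)) : |v y| ≤ wnorm ν v * japaneseBracket y ^ (-ν) := by
  rw [rpow_neg (japaneseBracket_pos y).le,
    le_mul_inv_iff₀ (rpow_pos_of_pos (japaneseBracket_pos y) _), mul_comm]
  exact le_ciSup hvb y

theorem convolution_weighted_bound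
    (d : ℕ) (hd : 3 ≤ d) (ν C : ℝ) (hν : (d : ℝ) < ν) (hC : 0 < C)
    (K : EuclideanSpace ℝ (Fin d) → ℝ) (hKmeas : Measurable K)
    (hK1 : ∀ x : EuclideanSpace ℝ (Fin d), ‖x‖ < 1 → |K x| ≤ C * ‖x‖ ^ ((2 : ℝ) - d))
    (hK2 : ∀ x : EuclideanSpace ℝ (Fin d), 1 ≤ ‖x‖ → |K x| ≤ C * ‖x‖ ^ ((1 - (d : ℝ)) / 2))
    (v : EuclideanSpace ℝ (Fin d) → ℝ) (hv : Continuous v)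
    (hvb : BddAbove (Set.range fun x => ((1 + ‖x‖ ^ 2) ^ ((1 : ℝ) / 2)) ^ ν * |v x|)) :
    (∀ x : EuclideanSpace ℝ (Fin d), Integrable (fun z => K z * v (x - z))) ∧
    ∃ C' > 0, ∀ x : EuclideanSpace ℝ (Fin d),
      ((1 + ‖x‖ ^ 2) ^ ((1 : ℝ) / 2)) ^ (((d : ℝ) - 1) / 2) *
          |∫ z, K z * v (x - z)| ≤ C' * wnorm ν v := by
  have hd' : (3 : ℝ) ≤ d := by exact_mod_cast hd
  have hfinrank : Module.finrank ℝ (EuclideanSpace ℝ (Fin d)) = d := finrank_euclideanSpace_fin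
  have hdim : (Module.finrank ℝ (EuclideanSpace ℝ (Fin d)) : ℝ) < ν := by rwa [hfinrank]
  set s : ℝ := ((d : ℝ) - 1) / 2 with hs_def
  have hs : 0 ≤ s := by linarith
  have hsν : s ≤ ν := by linarith
  have hKloc : IntegrableOn K (ball 0 1) :=
    integrableOn_ball_of_norm_le_rpow (by omega) (α := d - 2) (by rw [hfinrank]; linarith)
      (ae_restrict_of_forall_mem measurableSet_ball fun z hz => by
        simpa using hK1 z (mem_ball_zero_iff.1 hz)) hKmeas.aestronglyMeasurable
  have hKfar : ∀ z : EuclideanSpace ℝ (Fin d), 1 ≤ ‖z‖ → |K z| ≤ C * ‖z‖ ^ (-s) :=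
    fun z hz => (hK2 z hz).trans_eq (by rw [hs_def, ← neg_div, neg_sub])
  have hvdecay := abs_le_wnorm_mul_japaneseBracket_rpow_neg hvb
  refine ⟨integrable_mul_comp_sub hC.le hs hsν hdim hKmeas.aestronglyMeasurable hKloc hKfar hv
    hvdecay, 2 ^ s * (∫ z in ball 0 1, |K z|) +
      2 * 4 ^ s * C * ∫ z : EuclideanSpace ℝ (Fin d), japaneseBracket z ^ (-ν), ?_, fun x => ?_⟩
  · have := integral_japaneseBracket_rpow_neg_pos volume hdim
    have : 0 ≤ ∫ z in ball 0 1, |K z| := integral_nonneg fun z => abs_nonneg (K z)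
    positivity
  · rw [mul_comm _ (wnorm ν v)]
    exact japaneseBracket_rpow_mul_abs_integral_le hC.le hs hsν hdim hKmeas.aestronglyMeasurable
      hKloc hKfar hv hvdecay x
end
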